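/- arXiv:1612.08483 — 5 statements merged into one kernel-verified Lean document; each statement's English description precedes it below -/
import Mathlib

section
/- Let κ, λ ∈ ℝ and let φ : ℝ → ℝ be twice differentiable with φ''(s) = −κ·φ(s) for all s, φ(0) = 1, φ'(0) = −λ. Then the following are equivalent: (a) for every s ≥ 0 such that φ > 0 on [0, s], one has φ'(s) ≤ 0 and the derivative of the function u ↦ −φ'(u)/φ(u) at s is nonnegative; (b) either κ and λ satisfy the ball-condition with λ ≥ 0 (the convex-ball-condition), or κ ≤ 0 and λ = √|κ|. -/
/-- The monotone-condition characterization: for the Jacobi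
solution `φ` (with `φ(0) = 1`, `φ'(0) = -λ`, `φ'' = -κ φ`), one has
`φ' ≤ 0` and `(-φ'/φ)' ≥ 0` wherever `φ > 0` on `[0, s]`, iff either
κ, λ satisfy the convex-ball-condition, or `κ ≤ 0` and `λ = √|κ|`. -/
theorem monotone_condition_iff (κ lam : ℝ) (φ : ℝ → ℝ)
    (hφ : Differentiable ℝ φ) (hφ' : Differentiable ℝ (deriv φ))
    (hode : ∀ s : ℝ, deriv (deriv φ) s = -κ * φ s)
    (hφ0 : φ 0 = 1) (hφ0' : deriv φ 0 = -lam) :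
    (∀ s : ℝ, 0 ≤ s → (∀ u ∈ Set.Icc (0 : ℝ) s, 0 < φ u) →
        deriv φ s ≤ 0 ∧ 0 ≤ deriv (fun u => -deriv φ u / φ u) s) ↔
      (((0 < κ ∨ (κ = 0 ∧ 0 < lam) ∨ (κ < 0 ∧ Real.sqrt |κ| < lam)) ∧ 0 ≤ lam) ∨
        (κ ≤ 0 ∧ lam = Real.sqrt |κ|)) := by
  -- energy conservation
  have hder : ∀ x : ℝ, HasDerivAt (fun u => (deriv φ u)^2 + κ * (φ u)^2) 0 x := by
    intro x
    have h1 : HasDerivAt (fun u => (deriv φ u)^2)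
        ((2:ℕ) * deriv φ x ^ 1 * deriv (deriv φ) x) x :=
      ((hφ' x).hasDerivAt).pow 2
    have h2 : HasDerivAt (fun u => κ * (φ u)^2)
        (κ * ((2:ℕ) * φ x ^ 1 * deriv φ x)) x :=
      (((hφ x).hasDerivAt).pow 2).const_mul κ
    have h3 := h1.add h2
    rw [hode x] at h3
    have e : ((2:ℕ):ℝ) * deriv φ x ^ 1 * (-κ * φ x) + κ * ((2:ℕ) * φ x ^ 1 * deriv φ x) = 0 := by
      push_cast; ring
    rw [e] at h3
    exact h3
  have hE : ∀ s : ℝ, (deriv φ s)^2 + κ * (φ s)^2 = lam^2 + κ := by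
    intro s
    have hc := is_const_of_deriv_eq_zero (f := fun u => (deriv φ u)^2 + κ * (φ u)^2)
      (fun x => (hder x).differentiableAt) (fun x => (hder x).deriv) s 0
    rw [hφ0, hφ0'] at hc
    simpa using by linarith [hc]
  have hderivh : ∀ s : ℝ, φ s ≠ 0 →
      deriv (fun u => -deriv φ u / φ u) s = (lam^2 + κ) / (φ s)^2 := by
    intro s hs
    have h1 : HasDerivAt (fun u => -deriv φ u / φ u)
        ((-(deriv (deriv φ) s) * φ s - (-deriv φ s) * deriv φ s) / (φ s)^2) s :=
      ((hφ' s).hasDerivAt.neg).div (hφ s).hasDerivAt hs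
    rw [h1.deriv, hode s]
    have := hE s
    congr 1
    ring_nf
    ring_nf at this
    linarith
  constructor
  · intro h
    obtain ⟨h1, h2⟩ := h 0 le_rfl (by
      intro u hu
      obtain rfl : u = 0 := le_antisymm hu.2 hu.1
      simp [hφ0])
    have hlam : 0 ≤ lam := by rw [hφ0'] at h1; linarith
    have hne : φ 0 ≠ 0 := by rw [hφ0]; norm_num
    rw [hderivh 0 hne, hφ0] at h2
    have hk : 0 ≤ κ + lam^2 := by
      have : (0:ℝ) < (1:ℝ)^2 := by norm_num
      nlinarith [h2]
    rcases lt_trichotomy κ 0 with hκ | hκ | hκ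
    · have habs : |κ| ≤ lam^2 := by rw [abs_of_neg hκ]; linarith
      rcases lt_or_eq_of_le habs with hlt | heq
      · have hlne : lam ≠ 0 := by
          intro h0; rw [h0] at hlt; simp at hlt
          exact absurd hlt (not_lt.mpr (abs_nonneg κ))
        have hlp : 0 < lam := lt_of_le_of_ne hlam (Ne.symm hlne)
        exact Or.inl ⟨Or.inr (Or.inr ⟨hκ, (Real.sqrt_lt' hlp).mpr hlt⟩), hlam⟩
      · exact Or.inr ⟨hκ.le, by rw [heq, Real.sqrt_sq hlam]⟩
    · rcases eq_or_lt_of_le hlam with heq | hpos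
      · exact Or.inr ⟨hκ.le, by simp [hκ, ← heq]⟩
      · exact Or.inl ⟨Or.inr (Or.inl ⟨hκ, hpos⟩), hlam⟩
    · exact Or.inl ⟨Or.inl hκ, hlam⟩
  · intro h
    have key : 0 ≤ lam ∧ 0 ≤ κ + lam^2 := by
      rcases h with ⟨hd, hlam⟩ | ⟨hκ, heq⟩
      · refine ⟨hlam, ?_⟩
        rcases hd with hp | ⟨hz, hl⟩ | ⟨hκ, hl⟩
        · nlinarith
        · nlinarith
        · have hlp : 0 < lam := lt_of_le_of_lt (Real.sqrt_nonneg _) hl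
          have h2 : |κ| < lam^2 := (Real.sqrt_lt' hlp).mp hl
          rw [abs_of_neg hκ] at h2; linarith
      · have h1 : lam^2 = |κ| := by rw [heq, Real.sq_sqrt (abs_nonneg _)]
        rw [abs_of_nonpos hκ] at h1
        exact ⟨heq ▸ Real.sqrt_nonneg _, by linarith⟩
    obtain ⟨hlam, hk⟩ := key
    intro s hs hpos
    have hne : ∀ u ∈ Set.Icc (0:ℝ) s, φ u ≠ 0 := fun u hu => (hpos u hu).ne'
    have hd2 : deriv (fun u => -deriv φ u / φ u) s = (lam^2 + κ) / (φ s)^2 :=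
      hderivh s (hne s ⟨hs, le_rfl⟩)
    refine ⟨?_, by rw [hd2]; exact div_nonneg (by linarith) (sq_nonneg _)⟩
    have hmono : MonotoneOn (fun u => -deriv φ u / φ u) (Set.Icc 0 s) := by
      apply monotoneOn_of_deriv_nonneg (convex_Icc 0 s)
      · exact (hφ'.continuous.neg.continuousOn).div hφ.continuous.continuousOn hne
      · intro u hu
        rw [interior_Icc] at hu
        exact (((hφ' u).neg).div (hφ u)
          (hne u (Set.mem_Icc_of_Ioo hu))).differentiableWithinAt
      · intro u hu
        rw [interior_Icc] at hu
        rw [hderivh u (hne u (Set.mem_Icc_of_Ioo hu))]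
        exact div_nonneg (by linarith) (sq_nonneg _)
    have h0s : -deriv φ 0 / φ 0 ≤ -deriv φ s / φ s :=
      hmono ⟨le_rfl, hs⟩ ⟨hs, le_rfl⟩ hs
    rw [hφ0, hφ0'] at h0s
    have hps : 0 < φ s := hpos s ⟨hs, le_rfl⟩
    have h3 : 0 ≤ -deriv φ s / φ s := le_trans (by simpa using hlam) h0s
    have h4 := mul_nonneg h3 hps.le
    rw [div_mul_cancel₀ _ hps.ne'] at h4
    linarith
end

section
/- Let κ, λ ∈ ℝ and let φ : ℝ → ℝ be twice differentiable with φ''(s) = −κ·φ(s) for all s, φ(0) = 1, φ'(0) = −λ. Then the following are equivalent: (a) for every s ≥ 0 such that φ > 0 on [0, s], the derivative of the function u ↦ −φ'(u)/φ(u) at s is nonnegative; (b) either κ ≥ 0, or κ < 0 and |λ| ≥ √|κ|. -/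
/-!
Along a solution of `φ'' = -κ φ` the energy `φ'² + κ φ²` is conserved, so it equals its
initial value `λ² + κ`. Hence, wherever `φ ≠ 0`, `(-φ'/φ)' = (φ'² + κ φ²) / φ² = (λ² + κ) / φ²`,
which is nonnegative for every admissible `s` exactly when `λ² + κ ≥ 0` (test `s = 0`),
and that is condition (b).
-/

section JacobiEquation

variable {κ : ℝ} {φ : ℝ → ℝ}

theorem hasDerivAt_jacobi_energy (hφ : Differentiable ℝ φ) (hφ' : Differentiable ℝ (deriv φ))
    (hode : ∀ s, deriv (deriv φ) s = -κ * φ s) (s : ℝ) :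
    HasDerivAt (fun u => deriv φ u ^ 2 + κ * φ u ^ 2) 0 s := by
  have h := ((hφ' s).hasDerivAt.fun_pow 2).fun_add (((hφ s).hasDerivAt.fun_pow 2).const_mul κ)
  rw [hode s] at h
  exact h.congr_deriv (by push_cast; ring)

theorem jacobi_energy_eq (hφ : Differentiable ℝ φ) (hφ' : Differentiable ℝ (deriv φ))
    (hode : ∀ s, deriv (deriv φ) s = -κ * φ s) (s t : ℝ) :
    deriv φ s ^ 2 + κ * φ s ^ 2 = deriv φ t ^ 2 + κ * φ t ^ 2 :=
  is_const_of_deriv_eq_zero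
    (fun u => (hasDerivAt_jacobi_energy hφ hφ' hode u).differentiableAt)
    (fun u => (hasDerivAt_jacobi_energy hφ hφ' hode u).deriv) s t

theorem deriv_neg_logDeriv_of_jacobi (hφ : Differentiable ℝ φ)
    (hφ' : Differentiable ℝ (deriv φ)) (hode : ∀ s, deriv (deriv φ) s = -κ * φ s) {s : ℝ}
    (hs : φ s ≠ 0) :
    deriv (fun u => -deriv φ u / φ u) s = (deriv φ s ^ 2 + κ * φ s ^ 2) / φ s ^ 2 := by
  have hnum : HasDerivAt (fun u => -deriv φ u) (κ * φ s) s := by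
    simpa [hode s] using (hφ' s).hasDerivAt.fun_neg
  rw [(hnum.fun_div (hφ s).hasDerivAt hs).deriv]
  ring

end JacobiEquation

theorem sq_add_nonneg_iff_nonneg_or_sqrt_abs_le (κ lam : ℝ) :
    0 ≤ lam ^ 2 + κ ↔ 0 ≤ κ ∨ (κ < 0 ∧ Real.sqrt |κ| ≤ |lam|) := by
  rw [← Real.sqrt_sq_eq_abs lam, Real.sqrt_le_sqrt_iff (sq_nonneg lam)]
  rcases le_or_gt 0 κ with hκ | hκ
  · simp only [hκ, true_or, iff_true]
    positivity
  · rw [abs_of_neg hκ]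
    simp only [not_le.mpr hκ, hκ, true_and, false_or]
    constructor <;> intro h <;> linarith

/-- The weakly-monotone-condition characterization: for the
Jacobi solution `φ` (with `φ(0) = 1`, `φ'(0) = -λ`, `φ'' = -κ φ`), the
function `-φ'/φ` has nonnegative derivative wherever `φ > 0` on `[0, s]`,
iff either `κ ≥ 0`, or `κ < 0` and `|λ| ≥ √|κ|`. -/
theorem weakly_monotone_condition_iff (κ lam : ℝ) (φ : ℝ → ℝ)
    (hφ : Differentiable ℝ φ) (hφ' : Differentiable ℝ (deriv φ))
    (hode : ∀ s : ℝ, deriv (deriv φ) s = -κ * φ s)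
    (hφ0 : φ 0 = 1) (hφ0' : deriv φ 0 = -lam) :
    (∀ s : ℝ, 0 ≤ s → (∀ u ∈ Set.Icc (0 : ℝ) s, 0 < φ u) →
        0 ≤ deriv (fun u => -deriv φ u / φ u) s) ↔
      (0 ≤ κ ∨ (κ < 0 ∧ Real.sqrt |κ| ≤ |lam|)) := by
  have hderiv : ∀ s, φ s ≠ 0 → deriv (fun u => -deriv φ u / φ u) s = (lam ^ 2 + κ) / φ s ^ 2 := by
    intro s hs
    rw [deriv_neg_logDeriv_of_jacobi hφ hφ' hode hs, jacobi_energy_eq hφ hφ' hode s 0, hφ0, hφ0']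
    ring
  rw [← sq_add_nonneg_iff_nonneg_or_sqrt_abs_le]
  constructor
  · intro h
    have h0 := h 0 le_rfl fun u hu => by simp_all [Set.Icc_self]
    simpa [hderiv 0 (by simp [hφ0]), hφ0] using h0
  · intro h s hs hpos
    rw [hderiv s (hpos s ⟨hs, le_rfl⟩).ne']
    positivity
end

section
/- Let n ≥ 2 be an integer, κ, λ ∈ ℝ, and let φ : ℝ → ℝ be twice differentiable with φ''(s) = −κ·φ(s) for all s, φ(0) = 1, φ'(0) = −λ. Let S > 0 and let F : (0, S) → ℝ be differentiable with F'(s) ≥ (n−1)κ + F(s)²/(n−1) for all s ∈ (0, S), and suppose liminf_{s→0⁺} F(s) ≥ (n−1)λ. Then for every s ∈ (0, S) such that φ > 0 on (0, s], one has F(s) ≥ −(n−1)·φ'(s)/φ(s). -/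
/-!
With `c = n - 1` and `H = -c φ'/φ`, consider `G = φ² (F - H) = φ² F + c φ φ'`. Using `φ'' = -κ φ`,
`G' = (φ F + c φ')² / c + φ² (F' - c κ - F² / c) ≥ 0`, so `G` is nondecreasing on `(0, S)`.
Near `0`, `φ → 1`, `φ' → -λ` and `F ≳ c λ`, so `G ≳ c λ - c λ = 0`. Hence `G(s) ≥ 0`, which is
`F(s) ≥ H(s)` wherever `φ(s) > 0`.
-/

open Set Filter Topology

/-- `φ² (F + c φ' / φ)`, cleared of the denominator so that it is defined and differentiable
also where `φ` vanishes. -/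
noncomputable def riccatiGap (c : ℝ) (φ F : ℝ → ℝ) (t : ℝ) : ℝ :=
  φ t ^ 2 * F t + c * (φ t * deriv φ t)

theorem neg_mul_deriv_div_le_of_riccatiGap_nonneg {c : ℝ} {φ F : ℝ → ℝ} {t : ℝ}
    (hφ : 0 < φ t) (hG : 0 ≤ riccatiGap c φ F t) : -c * deriv φ t / φ t ≤ F t := by
  rw [div_le_iff₀ hφ]
  unfold riccatiGap at hG
  nlinarith

theorem riccati_deriv_identity {c : ℝ} (hc : c ≠ 0) (κ p q f f' : ℝ) :
    2 * p * q * f + p ^ 2 * f' + c * (q ^ 2 - κ * p ^ 2)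
      = (p * f + c * q) ^ 2 / c + p ^ 2 * (f' - (c * κ + f ^ 2 / c)) := by
  field_simp
  ring

theorem hasDerivAt_riccatiGap {c κ t : ℝ} {φ F : ℝ → ℝ} (hφ : DifferentiableAt ℝ φ t)
    (hφ' : HasDerivAt (deriv φ) (-κ * φ t) t) (hF : DifferentiableAt ℝ F t) :
    HasDerivAt (riccatiGap c φ F)
      (2 * φ t * deriv φ t * F t + φ t ^ 2 * deriv F t
        + c * (deriv φ t ^ 2 - κ * φ t ^ 2)) t := by
  have h := ((hφ.hasDerivAt.fun_pow 2).mul hF.hasDerivAt).add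
    ((hφ.hasDerivAt.mul hφ').const_mul c)
  exact h.congr_deriv (by ring)

theorem monotoneOn_riccatiGap {c κ : ℝ} {φ F : ℝ → ℝ} {D : Set ℝ} (hc : 0 < c)
    (hD : Convex ℝ D) (hφ : Differentiable ℝ φ) (hφ' : Differentiable ℝ (deriv φ))
    (hode : ∀ t, deriv (deriv φ) t = -κ * φ t) (hF : ∀ t ∈ D, DifferentiableAt ℝ F t)
    (hF' : ∀ t ∈ D, c * κ + F t ^ 2 / c ≤ deriv F t) :
    MonotoneOn (riccatiGap c φ F) D := by
  have hG : ∀ t ∈ D, HasDerivAt (riccatiGap c φ F)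
      (2 * φ t * deriv φ t * F t + φ t ^ 2 * deriv F t
        + c * (deriv φ t ^ 2 - κ * φ t ^ 2)) t := fun t ht =>
    hasDerivAt_riccatiGap (hφ t) (hode t ▸ (hφ' t).hasDerivAt) (hF t ht)
  refine monotoneOn_of_deriv_nonneg hD
    (fun t ht => (hG t ht).continuousAt.continuousWithinAt)
    (fun t ht => (hG t (interior_subset ht)).differentiableAt.differentiableWithinAt)
    fun t ht => ?_
  have ht := interior_subset ht
  rw [(hG t ht).deriv, riccati_deriv_identity hc.ne']
  have := sub_nonneg.mpr (hF' t ht)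
  positivity

theorem eventually_neg_lt_riccatiGap {c lam : ℝ} {φ F : ℝ → ℝ} (hφ : ContinuousAt φ 0)
    (hφ' : ContinuousAt (deriv φ) 0) (hφ0 : φ 0 = 1) (hφ0' : deriv φ 0 = -lam)
    (hF : ∀ ε : ℝ, 0 < ε → ∀ᶠ t in 𝓝[>] 0, c * lam - ε ≤ F t) {ε : ℝ} (hε : 0 < ε) :
    ∀ᶠ t in 𝓝[>] 0, -ε < riccatiGap c φ F t := by
  set lower : ℝ → ℝ := fun t => φ t ^ 2 * (c * lam - ε / 2) + c * (φ t * deriv φ t)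
  have hlower : ∀ᶠ t in 𝓝 0, -ε < lower t :=
    (continuousAt_const.eventually_lt ((hφ.pow 2).mul continuousAt_const |>.add
      (continuousAt_const.mul (hφ.mul hφ')))) (by simp [hφ0, hφ0']; linarith)
  filter_upwards [nhdsWithin_le_nhds hlower, hF (ε / 2) (half_pos hε)] with t hlt hFt
  calc -ε < lower t := hlt
    _ ≤ riccatiGap c φ F t := by
      simp only [lower, riccatiGap]
      nlinarith [mul_le_mul_of_nonneg_left hFt (sq_nonneg (φ t))]

theorem nonneg_of_monotoneOn_of_eventually_neg_lt {f : ℝ → ℝ} {a b : ℝ} (hab : a < b)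
    (hf : MonotoneOn f (Ioc a b)) (hlim : ∀ ε : ℝ, 0 < ε → ∀ᶠ t in 𝓝[>] a, -ε < f t) :
    0 ≤ f b := by
  refine le_of_forall_pos_lt_add fun ε hε => ?_
  obtain ⟨t, hft, ht⟩ := ((hlim ε hε).and (Ioc_mem_nhdsGT hab)).exists
  linarith [hf ht ⟨hab, le_rfl⟩ ht.2]

theorem riccati_comparison_general (n : ℕ) (hn : 2 ≤ n) (κ lam S : ℝ)
    (φ : ℝ → ℝ)
    (hφ : Differentiable ℝ φ) (hφ' : Differentiable ℝ (deriv φ))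
    (hode : ∀ s : ℝ, deriv (deriv φ) s = -κ * φ s)
    (hφ0 : φ 0 = 1) (hφ0' : deriv φ 0 = -lam)
    (F : ℝ → ℝ)
    (hF : ∀ s ∈ Set.Ioo (0 : ℝ) S, DifferentiableAt ℝ F s)
    (hF' : ∀ s ∈ Set.Ioo (0 : ℝ) S,
      ((n : ℝ) - 1) * κ + (F s) ^ 2 / ((n : ℝ) - 1) ≤ deriv F s)
    (hliminf : ∀ ε : ℝ, 0 < ε →
      ∀ᶠ s in nhdsWithin (0 : ℝ) (Set.Ioi 0), ((n : ℝ) - 1) * lam - ε ≤ F s) :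
    ∀ s ∈ Set.Ioo (0 : ℝ) S, (∀ u ∈ Set.Ioc (0 : ℝ) s, 0 < φ u) →
      -((n : ℝ) - 1) * deriv φ s / φ s ≤ F s := by
  intro s hs hφpos
  have hc : (0 : ℝ) < n - 1 := by
    have : (2 : ℝ) ≤ n := by exact_mod_cast hn
    linarith
  have hmono := monotoneOn_riccatiGap hc (convex_Ioo 0 S) hφ hφ' hode hF hF'
  have hG : 0 ≤ riccatiGap ((n : ℝ) - 1) φ F s :=
    nonneg_of_monotoneOn_of_eventually_neg_lt hs.1
      (hmono.mono fun t ht => ⟨ht.1, ht.2.trans_lt hs.2⟩)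
      fun ε hε => eventually_neg_lt_riccatiGap hφ.continuous.continuousAt
        hφ'.continuous.continuousAt hφ0 hφ0' hliminf hε
  exact neg_mul_deriv_div_le_of_riccatiGap_nonneg (hφpos s ⟨hs.1, le_rfl⟩) hG

/-- Riccati comparison: if `F` is differentiable on `(0, S)` with
`F' ≥ (n-1)κ + F²/(n-1)` and `liminf_{s→0⁺} F(s) ≥ (n-1)λ`, and `φ` is the
Jacobi solution with `φ(0) = 1`, `φ'(0) = -λ`, `φ'' = -κ φ`, then
`F(s) ≥ -(n-1) φ'(s)/φ(s)` on `(0, S)` wherever `φ > 0` on `(0, s]`. -/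
theorem riccati_comparison (n : ℕ) (hn : 2 ≤ n) (κ lam S : ℝ) (hS : 0 < S)
    (φ : ℝ → ℝ)
    (hφ : Differentiable ℝ φ) (hφ' : Differentiable ℝ (deriv φ))
    (hode : ∀ s : ℝ, deriv (deriv φ) s = -κ * φ s)
    (hφ0 : φ 0 = 1) (hφ0' : deriv φ 0 = -lam)
    (F : ℝ → ℝ)
    (hF : ∀ s ∈ Set.Ioo (0 : ℝ) S, DifferentiableAt ℝ F s)
    (hF' : ∀ s ∈ Set.Ioo (0 : ℝ) S,
      ((n : ℝ) - 1) * κ + (F s) ^ 2 / ((n : ℝ) - 1) ≤ deriv F s)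
    (hliminf : ∀ ε : ℝ, 0 < ε →
      ∀ᶠ s in nhdsWithin (0 : ℝ) (Set.Ioi 0), ((n : ℝ) - 1) * lam - ε ≤ F s) :
    ∀ s ∈ Set.Ioo (0 : ℝ) S, (∀ u ∈ Set.Ioc (0 : ℝ) s, 0 < φ u) →
      -((n : ℝ) - 1) * deriv φ s / φ s ≤ F s :=
  riccati_comparison_general n hn κ lam S φ hφ hφ' hode hφ0 hφ0' F hF hF' hliminf
end

section
/- Let E be a real inner product space, p ∈ (1, ∞) a real number, a > 0, b ≥ 0, and u, v ∈ E. Then ‖v‖^{p−2}·( p·b^{p−1}·a^{1−p}·⟨u, v⟩ − (p−1)·b^p·a^{−p}·‖v‖² ) ≤ ‖u‖^p, and equality holds if and only if u = (b/a)·v. -/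
/-!
With `t = b / a`, the left-hand side is `‖w‖^(p-2) (p ⟪u, w⟫ - (p-1) ‖w‖²)` for `w = t • v`,
the value at `u` of the tangent plane at `w` of the strictly convex function `‖·‖^p`.
Concretely it equals `p ‖w‖^(p-1) ‖u‖ - (p-1) ‖w‖^p` minus the nonnegative Cauchy–Schwarz
defect `p ‖w‖^(p-2) (‖u‖ ‖w‖ - ⟪u, w⟫)`, and the first term is at most `‖u‖^p` by the tangent
line inequality for `x ↦ x^p` (Bernoulli), with equality only at `‖u‖ = ‖w‖`. Equality overall
thus forces `‖u‖ = ‖w‖` and `⟪u, w⟫ = ‖u‖ ‖w‖`, i.e. `u = w`.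
-/

open scoped RealInnerProductSpace
open Real

section Tangent

variable {p x y : ℝ}

theorem rpow_tangent_self (hp : 1 < p) (hy : 0 ≤ y) :
    p * y ^ (p - 1) * y - (p - 1) * y ^ p = y ^ p := by
  have hyp : y ^ p = y ^ (p - 1) * y := by
    rw [← rpow_add_one' hy (by linarith), sub_add_cancel]
  rw [hyp]; ring

theorem rpow_tangent_lt (hp : 1 < p) (hx : 0 ≤ x) (hy : 0 ≤ y) (hxy : x ≠ y) :
    p * y ^ (p - 1) * x - (p - 1) * y ^ p < x ^ p := by
  rcases hy.eq_or_lt with rfl | hy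
  · rw [zero_rpow (by linarith), zero_rpow (by linarith), mul_zero, mul_zero, zero_mul, sub_zero]
    exact rpow_pos_of_pos (hx.lt_of_ne' hxy) p
  · have bernoulli := one_add_mul_self_lt_rpow_one_add (s := x / y - 1)
      (by linarith [div_nonneg hx hy.le]) (sub_ne_zero.2 (mt (div_eq_one_iff_eq hy.ne').1 hxy)) hp
    rw [add_sub_cancel, div_rpow hx hy.le, lt_div_iff₀ (rpow_pos_of_pos hy p)] at bernoulli
    have hyp : y ^ p = y ^ (p - 1) * y := by
      rw [← rpow_add_one' hy.le (by linarith), sub_add_cancel]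
    calc p * y ^ (p - 1) * x - (p - 1) * y ^ p = (1 + p * (x / y - 1)) * y ^ p := by
          rw [hyp]; field_simp; ring
      _ < x ^ p := bernoulli

theorem rpow_tangent_le (hp : 1 < p) (hx : 0 ≤ x) (hy : 0 ≤ y) :
    p * y ^ (p - 1) * x - (p - 1) * y ^ p ≤ x ^ p := by
  rcases eq_or_ne x y with rfl | hxy
  · exact (rpow_tangent_self hp hx).le
  · exact (rpow_tangent_lt hp hx hy hxy).le

theorem rpow_tangent_eq_iff (hp : 1 < p) (hx : 0 ≤ x) (hy : 0 ≤ y) :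
    p * y ^ (p - 1) * x - (p - 1) * y ^ p = x ^ p ↔ x = y := by
  refine ⟨fun h => ?_, by rintro rfl; exact rpow_tangent_self hp hx⟩
  by_contra hxy
  exact (rpow_tangent_lt hp hx hy hxy).ne h

end Tangent

section Picone

variable {E : Type*} [NormedAddCommGroup E] [InnerProductSpace ℝ E] {p : ℝ}

theorem norm_rpow_sub_two_mul_eq (hp : 1 < p) (u w : E) :
    ‖w‖ ^ (p - 2) * (p * ⟪u, w⟫ - (p - 1) * ‖w‖ ^ 2) =
      (p * ‖w‖ ^ (p - 1) * ‖u‖ - (p - 1) * ‖w‖ ^ p) -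
        p * ‖w‖ ^ (p - 2) * (‖u‖ * ‖w‖ - ⟪u, w⟫) := by
  have h1 : ‖w‖ ^ (p - 1) = ‖w‖ ^ (p - 2) * ‖w‖ := by
    rw [← rpow_add_one' (norm_nonneg w) (by linarith)]; ring_nf
  have h2 : ‖w‖ ^ p = ‖w‖ ^ (p - 2) * ‖w‖ ^ 2 := by
    rw [← rpow_natCast, ← rpow_add' (norm_nonneg w) (by norm_num; linarith)]; norm_num
  rw [h1, h2]; ring

theorem cauchySchwarz_defect_nonneg (hp : 1 < p) (u w : E) :
    0 ≤ p * ‖w‖ ^ (p - 2) * (‖u‖ * ‖w‖ - ⟪u, w⟫) := by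
  have := real_inner_le_norm u w
  have := rpow_nonneg (norm_nonneg w) (p - 2)
  have : 0 < p := by linarith
  positivity

theorem norm_rpow_sub_two_mul_le (hp : 1 < p) (u w : E) :
    ‖w‖ ^ (p - 2) * (p * ⟪u, w⟫ - (p - 1) * ‖w‖ ^ 2) ≤ ‖u‖ ^ p := by
  rw [norm_rpow_sub_two_mul_eq hp]
  linarith [rpow_tangent_le hp (norm_nonneg u) (norm_nonneg w), cauchySchwarz_defect_nonneg hp u w]

theorem norm_rpow_sub_two_mul_eq_iff (hp : 1 < p) (u w : E) :
    ‖w‖ ^ (p - 2) * (p * ⟪u, w⟫ - (p - 1) * ‖w‖ ^ 2) = ‖u‖ ^ p ↔ u = w := by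
  refine ⟨fun h => ?_, ?_⟩
  · rw [norm_rpow_sub_two_mul_eq hp] at h
    have tangent_le := rpow_tangent_le hp (norm_nonneg u) (norm_nonneg w)
    have defect_nonneg := cauchySchwarz_defect_nonneg hp u w
    have hnorm : ‖u‖ = ‖w‖ :=
      (rpow_tangent_eq_iff hp (norm_nonneg u) (norm_nonneg w)).1 (by linarith)
    rcases eq_or_ne w 0 with rfl | hw
    · simpa using hnorm
    have hw' : 0 < ‖w‖ := norm_pos_iff.2 hw
    have hdefect : p * ‖w‖ ^ (p - 2) * (‖u‖ * ‖w‖ - ⟪u, w⟫) = 0 := by linarith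
    have hinner : ⟪u, w⟫ = ‖u‖ * ‖w‖ := by
      rcases mul_eq_zero.1 hdefect with h0 | h0
      · exact absurd h0 (mul_pos (by linarith) (rpow_pos_of_pos hw' _)).ne'
      · linarith
    rw [inner_eq_norm_mul_iff_real, hnorm] at hinner
    exact smul_right_injective E hw'.ne' hinner
  · rintro rfl
    rw [norm_rpow_sub_two_mul_eq hp, real_inner_self_eq_norm_mul_norm, sub_self, mul_zero,
      sub_zero, rpow_tangent_self hp (norm_nonneg u)]

theorem norm_smul_rpow_sub_two_mul {t : ℝ} (hp : 1 < p) (ht : 0 ≤ t) (u v : E) :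
    ‖t • v‖ ^ (p - 2) * (p * ⟪u, t • v⟫ - (p - 1) * ‖t • v‖ ^ 2) =
      ‖v‖ ^ (p - 2) * (p * t ^ (p - 1) * ⟪u, v⟫ - (p - 1) * t ^ p * ‖v‖ ^ 2) := by
  have h1 : t ^ (p - 1) = t ^ (p - 2) * t := by
    rw [← rpow_add_one' ht (by linarith)]; ring_nf
  have h2 : t ^ p = t ^ (p - 2) * t ^ 2 := by
    rw [← rpow_natCast, ← rpow_add' ht (by norm_num; linarith)]; norm_num
  rw [norm_smul, norm_of_nonneg ht, mul_rpow ht (norm_nonneg v), real_inner_smul_right, h1, h2]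
  ring

end Picone

/-- Pointwise Picone-type inequality: for `p ∈ (1, ∞)`, `a > 0`,
`b ≥ 0` and vectors `u, v` in a real inner product space,
`‖v‖^{p-2} (p b^{p-1} a^{1-p} ⟪u,v⟫ - (p-1) b^p a^{-p} ‖v‖²) ≤ ‖u‖^p`,
with equality iff `u = (b/a) • v`. -/
theorem picone_pointwise {E : Type*} [NormedAddCommGroup E]
    [InnerProductSpace ℝ E] (p a b : ℝ) (hp : 1 < p) (ha : 0 < a) (hb : 0 ≤ b)
    (u v : E) :
    ‖v‖ ^ (p - 2) *
        (p * b ^ (p - 1) * a ^ (1 - p) * ⟪u, v⟫ -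
          (p - 1) * b ^ p * a ^ (-p) * ‖v‖ ^ 2) ≤ ‖u‖ ^ p ∧
      (‖v‖ ^ (p - 2) *
          (p * b ^ (p - 1) * a ^ (1 - p) * ⟪u, v⟫ -
            (p - 1) * b ^ p * a ^ (-p) * ‖v‖ ^ 2) = ‖u‖ ^ p ↔
        u = (b / a) • v) := by
  have hcoef1 : p * b ^ (p - 1) * a ^ (1 - p) = p * (b / a) ^ (p - 1) := by
    rw [mul_assoc, div_rpow hb ha.le, show 1 - p = -(p - 1) by ring, rpow_neg ha.le,
      div_eq_mul_inv]
  have hcoef2 : (p - 1) * b ^ p * a ^ (-p) = (p - 1) * (b / a) ^ p := by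
    rw [mul_assoc, div_rpow hb ha.le, rpow_neg ha.le, div_eq_mul_inv]
  rw [hcoef1, hcoef2, ← norm_smul_rpow_sub_two_mul hp (div_nonneg hb ha.le)]
  exact ⟨norm_rpow_sub_two_mul_le hp u _, norm_rpow_sub_two_mul_eq_iff hp u _⟩
end

section
/- Let p ∈ (1, ∞) be a real number, ν > 0, n ≥ 2 an integer, D > 0, and κ, λ ∈ ℝ. Let φ : ℝ → ℝ be twice differentiable with φ''(s) = −κ·φ(s) for all s, φ(0) = 1, φ'(0) = −λ, and suppose φ(s) > 0 for all s ∈ [0, D]. Let ϕ : ℝ → ℝ be differentiable on [0, D] with ϕ(0) = 0, ϕ'(D) = 0 and ϕ(s) > 0 for all s ∈ (0, D], and suppose the function Ψ(s) := |ϕ'(s)|^{p−2}·ϕ'(s)·φ(s)^{n−1} is differentiable on [0, D] with Ψ'(s) = −ν·|ϕ(s)|^{p−2}·ϕ(s)·φ(s)^{n−1} for all s ∈ [0, D]. Then ϕ'(s) > 0 for all s ∈ [0, D). -/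
/-!
The flux `Ψ = |ψ'|^{p-2} ψ' φ^{n-1}` has derivative `-ν |ψ|^{p-2} ψ φ^{n-1}`, which is negative on
`(0, D]` because `ψ` and `φ` are positive there. Hence `Ψ` is strictly decreasing on `[0, D]`, and
the Neumann condition `Ψ(D) = 0` forces `Ψ > 0` on `[0, D)`. Since `φ > 0`, the sign of `Ψ` is the
sign of `ψ'`.
-/

open Set

lemma abs_rpow_mul_self_pos_iff (q : ℝ) {x : ℝ} : 0 < |x| ^ q * x ↔ 0 < x := by
  refine ⟨fun h => ?_, fun hx => by positivity⟩
  by_contra! hx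
  exact h.not_ge (mul_nonpos_of_nonneg_of_nonpos (by positivity) hx)

lemma strictAntiOn_Icc_of_hasDerivAt_neg {f f' : ℝ → ℝ} {a b : ℝ}
    (hf : ∀ x ∈ Icc a b, HasDerivAt f (f' x) x) (hf' : ∀ x ∈ Ioo a b, f' x < 0) :
    StrictAntiOn f (Icc a b) := by
  refine strictAntiOn_of_hasDerivWithinAt_neg (f' := f') (convex_Icc a b)
    (fun x hx => (hf x hx).continuousAt.continuousWithinAt) (fun x hx => ?_) (fun x hx => ?_)
  · rw [interior_Icc] at hx ⊢
    exact (hf x (Ioo_subset_Icc_self hx)).hasDerivWithinAt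
  · exact hf' x (by rwa [interior_Icc] at hx)

theorem model_eigenfunction_deriv_pos_general (p ν : ℝ) (hν : 0 < ν)
    (n : ℕ) (D : ℝ) (φ : ℝ → ℝ)
    (hφpos : ∀ s ∈ Set.Icc (0 : ℝ) D, 0 < φ s)
    (ψ : ℝ → ℝ)
    (hψD : deriv ψ D = 0)
    (hψpos : ∀ s ∈ Set.Ioc (0 : ℝ) D, 0 < ψ s)
    (hΨ : ∀ s ∈ Set.Icc (0 : ℝ) D,
      HasDerivAt (fun u => |deriv ψ u| ^ (p - 2) * deriv ψ u * φ u ^ (n - 1))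
        (-ν * |ψ s| ^ (p - 2) * ψ s * φ s ^ (n - 1)) s) :
    ∀ s ∈ Set.Ico (0 : ℝ) D, 0 < deriv ψ s := by
  rintro s ⟨hs0, hsD⟩
  have hflux_anti : StrictAntiOn (fun u => |deriv ψ u| ^ (p - 2) * deriv ψ u * φ u ^ (n - 1))
      (Icc s D) := by
    refine strictAntiOn_Icc_of_hasDerivAt_neg (fun x hx => hΨ x ⟨hs0.trans hx.1, hx.2⟩)
      fun x hx => ?_
    have hψx := hψpos x ⟨hs0.trans_lt hx.1, hx.2.le⟩
    have hφx := hφpos x ⟨hs0.trans hx.1.le, hx.2.le⟩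
    have : 0 < ν * |ψ x| ^ (p - 2) * ψ x * φ x ^ (n - 1) := by positivity
    linarith
  have hflux_pos : 0 < |deriv ψ s| ^ (p - 2) * deriv ψ s * φ s ^ (n - 1) := by
    simpa [hψD] using hflux_anti (left_mem_Icc.2 hsD.le) (right_mem_Icc.2 hsD.le) hsD
  have hφs := hφpos s ⟨hs0, hsD.le⟩
  exact (abs_rpow_mul_self_pos_iff _).1 (pos_of_mul_pos_left hflux_pos (by positivity))

/-- The positive Dirichlet-Neumann eigenfunction of the model
weighted `p`-Laplacian eigenvalue problem has strictly positive derivative on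
`[0, D)`: if `φ` is the Jacobi solution (positive on `[0, D]`) and `ψ`
satisfies `ψ(0) = 0`, `ψ'(D) = 0`, `ψ > 0` on `(0, D]`, and
`(|ψ'|^{p-2} ψ' φ^{n-1})' = -ν |ψ|^{p-2} ψ φ^{n-1}` on `[0, D]`,
then `ψ' > 0` on `[0, D)`. -/
theorem model_eigenfunction_deriv_pos (p ν : ℝ) (hp : 1 < p) (hν : 0 < ν)
    (n : ℕ) (hn : 2 ≤ n) (D κ lam : ℝ) (hD : 0 < D) (φ : ℝ → ℝ)
    (hφ : Differentiable ℝ φ) (hφ' : Differentiable ℝ (deriv φ))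
    (hode : ∀ s : ℝ, deriv (deriv φ) s = -κ * φ s)
    (hφ0 : φ 0 = 1) (hφ0' : deriv φ 0 = -lam)
    (hφpos : ∀ s ∈ Set.Icc (0 : ℝ) D, 0 < φ s)
    (ψ : ℝ → ℝ)
    (hψdiff : ∀ s ∈ Set.Icc (0 : ℝ) D, DifferentiableAt ℝ ψ s)
    (hψ0 : ψ 0 = 0) (hψD : deriv ψ D = 0)
    (hψpos : ∀ s ∈ Set.Ioc (0 : ℝ) D, 0 < ψ s)
    (hΨ : ∀ s ∈ Set.Icc (0 : ℝ) D,
      HasDerivAt (fun u => |deriv ψ u| ^ (p - 2) * deriv ψ u * φ u ^ (n - 1))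
        (-ν * |ψ s| ^ (p - 2) * ψ s * φ s ^ (n - 1)) s) :
    ∀ s ∈ Set.Ico (0 : ℝ) D, 0 < deriv ψ s :=
  model_eigenfunction_deriv_pos_general p ν hν n D φ hφpos ψ hψD hψpos hΨ
end
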